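/- arXiv:1907.13383 — 3 statements merged into one kernel-verified Lean document; each statement's English description precedes it below -/
import Mathlib

section
/- Let R be a commutative ring in which e is a unit, and let f = X^{en} + a_{en-1}X^{en-1} + ... + a_0 be a monic polynomial of degree en over R. If f = g^e for a monic polynomial g = X^n + b_{n-1}X^{n-1} + ... + b_0 of degree n, then the coefficients b_{n-1}, ..., b_0 of g are uniquely determined by the top coefficients a_{en-1}, ..., a_{(e-1)n} of f. -/
/-!
Factor `p ^ e - q ^ e = (∑ i < e, p ^ i * q ^ (e - 1 - i)) * (p - q)`. Monic `e`-th roots of the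
same polynomial have the same degree, so the `e` summands are monic of one common degree and the
first factor has leading coefficient `e`. A polynomial with unit leading coefficient is not a zero
divisor, hence `p = q`.
-/

open Polynomial Finset

namespace Polynomial

variable {R : Type*} [CommRing R] {p q : R[X]}

theorem Monic.natDegree_eq_of_pow_eq (hp : p.Monic) (hq : q.Monic) {e : ℕ} (he : e ≠ 0)
    (h : p ^ e = q ^ e) : p.natDegree = q.natDegree :=
  Nat.eq_of_mul_eq_mul_left (Nat.pos_of_ne_zero he) <| by
    rw [← hp.natDegree_pow, ← hq.natDegree_pow, h]

theorem Monic.leadingCoeff_geom_sum₂ (hp : p.Monic) (hq : q.Monic)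
    (hpq : p.natDegree = q.natDegree) {e : ℕ} (he : (e : R) ≠ 0) :
    (∑ i ∈ range e, p ^ i * q ^ (e - 1 - i)).leadingCoeff = e := by
  have : Nontrivial R := nontrivial_of_ne _ _ he
  have hmonic : ∀ i ∈ range e, (p ^ i * q ^ (e - 1 - i)).Monic :=
    fun i _ ↦ (hp.pow i).mul (hq.pow _)
  have hsum : ∑ i ∈ range e, (p ^ i * q ^ (e - 1 - i)).leadingCoeff = e := by
    simp [sum_congr rfl fun i hi ↦ (hmonic i hi).leadingCoeff]
  have hdeg : ∀ i ∈ range e, (p ^ i * q ^ (e - 1 - i)).degree = ((e - 1) * p.natDegree : ℕ) := by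
    intro i hi
    rw [degree_eq_natDegree (hmonic i hi).ne_zero, (hp.pow i).natDegree_mul (hq.pow _),
      hp.natDegree_pow, hq.natDegree_pow, ← hpq, ← add_mul, Nat.add_sub_of_le]
    exact Nat.le_sub_one_of_lt (mem_range.mp hi)
  rw [leadingCoeff_sum_of_degree_eq hdeg (hsum ▸ he), hsum]

theorem Monic.eq_of_pow_eq (hp : p.Monic) (hq : q.Monic) {e : ℕ} (he : IsUnit (e : R))
    (h : p ^ e = q ^ e) : p = q := by
  nontriviality R
  have he₀ : e ≠ 0 := by rintro rfl; simp at he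
  have hlead := hp.leadingCoeff_geom_sum₂ hq (hp.natDegree_eq_of_pow_eq hq he₀ h) he.ne_zero
  have hfactor : (∑ i ∈ range e, p ^ i * q ^ (e - 1 - i)) * (p - q) = 0 := by
    rw [geom_sum₂_mul, h, sub_self]
  exact sub_eq_zero.mp ((isUnit_leadingCoeff_mul_right_eq_zero_iff (hlead ▸ he)).mp hfactor)

end Polynomial

theorem stmt2_general (R : Type) [CommRing R] (e : ℕ)
    (he : IsUnit (e : R))
    (f : Polynomial R)
    (g₁ g₂ : Polynomial R) (hg₁ : g₁.Monic) (hg₂ : g₂.Monic)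
    (h₁ : g₁ ^ e = f) (h₂ : g₂ ^ e = f) :
    g₁ = g₂ :=
  hg₁.eq_of_pow_eq hg₂ he (h₁.trans h₂.symm)

/-- In a commutative ring where `e` is a unit, a monic `e`-th root of a monic polynomial
of degree `e*n` is uniquely determined (in particular by the top coefficients of `f`):
any two monic degree-`n` polynomials with `g₁^e = g₂^e = f` coincide. -/
theorem stmt2 (R : Type) [CommRing R] (e n : ℕ)
    (he : IsUnit (e : R))
    (f : Polynomial R) (hf : f.Monic) (hdeg : f.natDegree = e * n)
    (g₁ g₂ : Polynomial R) (hg₁ : g₁.Monic) (hg₂ : g₂.Monic)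
    (hd₁ : g₁.natDegree = n) (hd₂ : g₂.natDegree = n)
    (h₁ : g₁ ^ e = f) (h₂ : g₂ ^ e = f) :
    g₁ = g₂ :=
  stmt2_general R e he f g₁ g₂ hg₁ hg₂ h₁ h₂
end

section
/- Let ζ₃ be a primitive cube root of unity and a ∈ ℚ(ζ₃)^× a non-cube. If the extension K₂ = ℚ(ζ₃, ∛a)/ℚ is abelian of degree 6, then the norm N_{ℚ(ζ₃)/ℚ}(a) = a·σ(a) is a cube in ℚ, where σ is the nontrivial automorphism of ℚ(ζ₃). -/
open Polynomial NumberField IntermediateField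

/-!
Lift `σ` to an automorphism `τ₀` of `K₂`; as `Gal(K₂/ℚ)` has order 6, `τ = τ₀ ^ 3` is an
involutive lift, and `τ ζ = ζ⁻¹`. Put `β = α · τ α`. An automorphism `g` fixing `ζ` fixes
`ℚ(ζ) ∋ α³`, so `g α = ω α` with `ω³ = 1`; as `g` commutes with `τ` and `τ ω = ω⁻¹`, `g β = β`.
An automorphism sending `ζ` to `ζ⁻¹` becomes one fixing `ζ` after composing with `τ`, which
fixes `β`. Hence `β ∈ ℚ`, and `β³ = a · σ a`.
-/

section
variable {K L : Type*} [Field K] [Field L] [Algebra K L]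

theorem AlgEquiv.eqOn_adjoin_simple {f g : L ≃ₐ[K] L} {x : L} (hx : f x = g x) {y : L}
    (hy : y ∈ K⟮x⟯) : f y = g y :=
  DFunLike.congr_fun (adjoin_algHom_ext K (φ₁ := (f : L →ₐ[K] L).comp K⟮x⟯.val)
    (φ₂ := (g : L →ₐ[K] L).comp K⟮x⟯.val) (by simpa)) ⟨y, hy⟩

theorem IsPrimitiveRoot.eq_or_eq_inv_of_three {ζ ξ : L} (hζ : IsPrimitiveRoot ζ 3)
    (hξ : IsPrimitiveRoot ξ 3) : ξ = ζ ∨ ξ = ζ⁻¹ := by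
  obtain ⟨i, hi, rfl⟩ := hζ.eq_pow_of_pow_eq_one hξ.pow_eq_one
  interval_cases i
  · exact absurd hξ (by simp)
  · simp
  · exact Or.inr (eq_inv_of_mul_eq_one_left (by rw [← pow_succ, hζ.pow_eq_one]))

theorem IsPrimitiveRoot.map_eq_inv_of_map_eq_inv {F : Type*} [FunLike F L L]
    [MonoidHomClass F L L] {n : ℕ} [NeZero n] {ζ ω : L} (hζ : IsPrimitiveRoot ζ n) {g : F}
    (hg : g ζ = ζ⁻¹) (hω : ω ^ n = 1) : g ω = ω⁻¹ := by
  obtain ⟨i, -, rfl⟩ := hζ.eq_pow_of_pow_eq_one hω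
  rw [map_pow, hg, inv_pow]

theorem apply_mul_apply_eq_self_of_pow_mem_adjoin {n : ℕ} [NeZero n] {ζ α : L}
    (hζ : IsPrimitiveRoot ζ n) (hα : α ≠ 0) (hαn : α ^ n ∈ K⟮ζ⟯) {τ g : L ≃ₐ[K] L}
    (hτ : τ ζ = ζ⁻¹) (hg : g ζ = ζ) (hcomm : Commute g τ) : g (α * τ α) = α * τ α := by
  set ω := g α / α
  have hω : ω ^ n = 1 := by
    rw [div_pow, ← map_pow, AlgEquiv.eqOn_adjoin_simple (g := 1) hg hαn, AlgEquiv.one_apply,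
      div_self (pow_ne_zero _ hα)]
  have hgα : g α = ω * α := (div_mul_cancel₀ _ hα).symm
  calc g (α * τ α) = g α * τ (g α) := by
        rw [map_mul, ← AlgEquiv.mul_apply g τ, hcomm.eq, AlgEquiv.mul_apply]
    _ = τ ω * ω * (α * τ α) := by rw [hgα, map_mul]; ring
    _ = α * τ α := by
        rw [hζ.map_eq_inv_of_map_eq_inv hτ hω, inv_mul_cancel₀ (IsUnit.of_pow_eq_one hω
          (NeZero.ne n)).ne_zero, one_mul]

theorem mul_apply_mem_range_algebraMap_of_pow_three_mem_adjoin [FiniteDimensional K L]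
    [IsGalois K L] {ζ α : L} (hζ : IsPrimitiveRoot ζ 3) (hα : α ≠ 0) (hα3 : α ^ 3 ∈ K⟮ζ⟯)
    {τ : L ≃ₐ[K] L} (hτζ : τ ζ = ζ⁻¹) (hτ2 : τ * τ = 1) (hcomm : ∀ g, Commute g τ) :
    α * τ α ∈ Set.range (algebraMap K L) := by
  have hττ (x : L) : τ (τ x) = x := by rw [← AlgEquiv.mul_apply, hτ2, AlgEquiv.one_apply]
  rw [IsGalois.mem_range_algebraMap_iff_fixed]
  intro g
  rcases hζ.eq_or_eq_inv_of_three (hζ.map_of_injective g.injective) with hg | hg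
  · exact apply_mul_apply_eq_self_of_pow_mem_adjoin hζ hα hα3 hτζ hg (hcomm g)
  · have hτg : (τ * g) ζ = ζ := by rw [AlgEquiv.mul_apply, hg, map_inv₀, hτζ, inv_inv]
    have := apply_mul_apply_eq_self_of_pow_mem_adjoin hζ hα hα3 hτζ hτg
      ((hcomm τ).mul_left (hcomm g))
    rw [AlgEquiv.mul_apply] at this
    calc g (α * τ α) = τ (τ (g (α * τ α))) := (hττ _).symm
      _ = τ (α * τ α) := by rw [this]
      _ = α * τ α := by rw [map_mul, hττ, mul_comm]

theorem AlgEquiv.liftNormal_apply_eq_inv [Normal K L] {ζ : L} (hζ : IsPrimitiveRoot ζ 3)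
    {σ : K⟮ζ⟯ ≃ₐ[K] K⟮ζ⟯} (hσ : σ ≠ 1) : σ.liftNormal L ζ = ζ⁻¹ := by
  refine (hζ.eq_or_eq_inv_of_three (hζ.map_of_injective (σ.liftNormal L).injective)).resolve_left
    fun h ↦ hσ (AlgEquiv.ext fun x ↦ Subtype.val_injective ?_)
  exact (σ.liftNormal_commutes L x).symm.trans (AlgEquiv.eqOn_adjoin_simple (g := 1) h x.2)

end

theorem stmt16_general (K₂ : Type) [Field K₂] [NumberField K₂]
    (ζ α : K₂) (hζ : IsPrimitiveRoot ζ 3)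
    (F : IntermediateField ℚ K₂) (hF : F = IntermediateField.adjoin ℚ {ζ})
    (a : F) (ha0 : a ≠ 0)
    (hα : α ^ 3 = algebraMap F K₂ a)
    (hdeg : Module.finrank ℚ K₂ = 6)
    (hGal : IsGalois ℚ K₂)
    (hab : ∀ g h : K₂ ≃ₐ[ℚ] K₂, g * h = h * g)
    (σ : F ≃ₐ[ℚ] F) (hσ : σ ≠ AlgEquiv.refl) :
    ∃ c : ℚ, (algebraMap ℚ F) c ^ 3 = (a : F) * σ a := by
  subst hF
  set τ₀ := σ.liftNormal K₂
  have hτ₀ζ : τ₀ ζ = ζ⁻¹ := AlgEquiv.liftNormal_apply_eq_inv hζ hσ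
  set τ := τ₀ ^ 3
  have hτζ : τ ζ = ζ⁻¹ := by simp [τ, pow_succ, hτ₀ζ]
  have hτ2 : τ * τ = 1 := by
    rw [← pow_add, show 3 + 3 = Module.finrank ℚ K₂ from hdeg.symm,
      ← IsGalois.card_aut_eq_finrank]
    exact pow_card_eq_one'
  have hτσ (x : ℚ⟮ζ⟯) : τ (algebraMap _ K₂ x) = algebraMap _ K₂ (σ x) :=
    (AlgEquiv.eqOn_adjoin_simple (hτζ.trans hτ₀ζ.symm) x.2).trans (σ.liftNormal_commutes K₂ x)
  have hα0 : α ≠ 0 := by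
    rintro rfl
    exact ha0 (Subtype.val_injective (by simpa using hα.symm))
  obtain ⟨c, hc⟩ :=
    mul_apply_mem_range_algebraMap_of_pow_three_mem_adjoin hζ hα0 (hα ▸ a.2) hτζ hτ2 (hab · τ)
  refine ⟨c, Subtype.val_injective ?_⟩
  calc ((algebraMap ℚ ℚ⟮ζ⟯ c ^ 3 : ℚ⟮ζ⟯) : K₂) = (α * τ α) ^ 3 := by rw [← hc]; rfl
    _ = α ^ 3 * τ (α ^ 3) := by rw [map_pow, mul_pow]
    _ = ((a * σ a : ℚ⟮ζ⟯) : K₂) := by rw [hα, hτσ, ← map_mul]; rfl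

/-- If `a ∈ ℚ(ζ₃)` is such that `X³ - a` is irreducible and `K₂ = ℚ(ζ₃, ∛a)` is an
abelian extension of `ℚ` of degree `6`, then the norm `N(a) = a·σ(a)` is a cube in `ℚ`,
where `σ` is the nontrivial automorphism of `ℚ(ζ₃)`. -/
theorem stmt16 (K₂ : Type) [Field K₂] [NumberField K₂]
    (ζ α : K₂) (hζ : IsPrimitiveRoot ζ 3)
    (F : IntermediateField ℚ K₂) (hF : F = IntermediateField.adjoin ℚ {ζ})
    (a : F) (ha0 : a ≠ 0)
    (hirr : Irreducible (Polynomial.X ^ 3 - Polynomial.C a : Polynomial F))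
    (hα : α ^ 3 = algebraMap F K₂ a)
    (hgen : IntermediateField.adjoin ℚ ({ζ, α} : Set K₂) = ⊤)
    (hdeg : Module.finrank ℚ K₂ = 6)
    (hGal : IsGalois ℚ K₂)
    (hab : ∀ g h : K₂ ≃ₐ[ℚ] K₂, g * h = h * g)
    (σ : F ≃ₐ[ℚ] F) (hσ : σ ≠ AlgEquiv.refl) :
    ∃ c : ℚ, (algebraMap ℚ F) c ^ 3 = (a : F) * σ a :=
  stmt16_general K₂ ζ α hζ F hF a ha0 hα hdeg hGal hab σ hσ
end

section
/- Let a ∈ ℚ(ζ₃)^× with K₂ = ℚ(ζ₃, ∛a)/ℚ abelian of degree 6 and N(a) = a·σ(a) a rational cube with rational cube root c = ∛(N(a)) ∈ ℚ. Let α = ∛a ∈ K₂ and g = (α/c)²·σ(a). Then the element α + g is fixed by the unique automorphism of order 2 of K₂ and generates the unique cyclic cubic subfield of K₂ over ℚ. -/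
open Polynomial NumberField IntermediateField

/-!
Since `τ` restricts to the nontrivial automorphism `σ` of `ℚ(ζ)`, it moves `ζ`. The product
`α · τ(α)` is fixed by `τ` and its cube is `a · σ(a) = c³`; as the only `τ`-fixed cube root of
unity is `1`, we get `α · τ(α) = c`, i.e. `τ(α) = c / α = g`. Hence `α + g` lies in the fixed
field of `τ`, which has degree `6 / 2 = 3`, and it is not rational: otherwise `α` would be a
root of `X² - (α + g) X + c`, while `X³ - a` is its minimal polynomial over `ℚ(ζ)`.
-/

/- `x / y` is a `p`-th root of unity fixed by `φ`; if it were not `1`, it would generate `ζ`. -/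
theorem IsPrimitiveRoot.eq_of_pow_eq_pow_of_map_eq {K : Type*} [Field K] {p : ℕ} {ζ x y : K}
    (hζ : IsPrimitiveRoot ζ p) (hp : p.Prime) (φ : K →+* K) (hφζ : φ ζ ≠ ζ)
    (hx : φ x = x) (hy : φ y = y) (hxy : x ^ p = y ^ p) : x = y := by
  have : NeZero p := ⟨hp.ne_zero⟩
  rcases eq_or_ne y 0 with rfl | hy0
  · rw [zero_pow hp.ne_zero] at hxy
    exact pow_eq_zero_iff hp.ne_zero |>.1 hxy
  obtain ⟨i, hip, hi⟩ := hζ.eq_pow_of_pow_eq_one (ξ := x / y)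
    (by rw [div_pow, hxy, div_self (pow_ne_zero _ hy0)])
  rcases eq_or_ne i 0 with rfl | hi0
  · rwa [pow_zero, eq_comm, div_eq_one_iff_eq hy0] at hi
  have hprim : IsPrimitiveRoot (ζ ^ i) p :=
    hζ.pow_of_coprime i (Nat.coprime_of_lt_prime hi0 hip hp).symm
  obtain ⟨j, -, hj⟩ := hprim.eq_pow_of_pow_eq_one hζ.pow_eq_one
  refine absurd ?_ hφζ
  rw [← hj, map_pow, hi, map_div₀, hx, hy]

theorem AlgEquiv.apply_apply_of_orderOf_eq_two {R A : Type*} [CommSemiring R] [Semiring A]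
    [Algebra R A] {τ : A ≃ₐ[R] A} (hτ : orderOf τ = 2) (x : A) : τ (τ x) = x := by
  have h := pow_orderOf_eq_one τ
  rw [hτ, sq] at h
  exact DFunLike.congr_fun h x

namespace IntermediateField

variable {F E : Type*} [Field F] [Field E] [Algebra F E]

theorem mem_fixedField_zpowers_iff {τ : E ≃ₐ[F] E} {x : E} :
    x ∈ fixedField (Subgroup.zpowers τ) ↔ τ x = x := by
  rw [mem_fixedField_iff, Subgroup.forall_mem_zpowers]
  exact MulAction.mem_fixedBy_zpowers_iff_mem_fixedBy (g := τ) (a := x)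

theorem finrank_fixedField_zpowers_mul_orderOf [FiniteDimensional F E] (τ : E ≃ₐ[F] E) :
    Module.finrank F (fixedField (Subgroup.zpowers τ)) * orderOf τ = Module.finrank F E := by
  rw [← Nat.card_zpowers, ← finrank_fixedField_eq_card, Module.finrank_mul_finrank]

theorem finrank_adjoin_simple_eq_of_finrank_prime {L : IntermediateField F E}
    (hL : (Module.finrank F L).Prime) {x : E} (hxL : x ∈ L)
    (hx : x ∉ (⊥ : IntermediateField F E)) :
    Module.finrank F F⟮x⟯ = Module.finrank F L := by
  rcases (Nat.dvd_prime hL).1 (finrank_dvd_of_le_right (adjoin_simple_le_iff.2 hxL)) with h | h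
  · exact absurd (adjoin_simple_eq_bot_iff.1 (finrank_eq_one_iff.1 h)) hx
  · exact h

end IntermediateField

theorem minpoly.natDegree_le_two_of_add_eq_of_mul_eq {K L : Type*} [Field K] [Field L]
    [Algebra K L] {x y : L} {s p : K} (hs : x + y = algebraMap K L s)
    (hp : x * y = algebraMap K L p) : (minpoly K x).natDegree ≤ 2 := by
  have hmonic : (X ^ 2 - C s * X + C p : K[X]).Monic := by monicity!
  have hroot : Polynomial.aeval x (X ^ 2 - C s * X + C p : K[X]) = 0 := by
    simp only [map_add, map_sub, map_mul, map_pow, aeval_X, aeval_C]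
    rw [← hs, ← hp]
    ring
  refine natDegree_le_of_degree_le
    ((minpoly.degree_le_of_ne_zero K x hmonic.ne_zero hroot).trans ?_)
  compute_degree!

theorem stmt17_general (K₂ : Type) [Field K₂] [NumberField K₂]
    (ζ α : K₂) (hζ : IsPrimitiveRoot ζ 3)
    (F : IntermediateField ℚ K₂) (hF : F = IntermediateField.adjoin ℚ {ζ})
    (a : F) (ha0 : a ≠ 0)
    (hirr : Irreducible (Polynomial.X ^ 3 - Polynomial.C a : Polynomial F))
    (hα : α ^ 3 = algebraMap F K₂ a)
    (hdeg : Module.finrank ℚ K₂ = 6)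
    (σ : F ≃ₐ[ℚ] F) (hσ : σ ≠ AlgEquiv.refl)
    (c : ℚ) (hc : (algebraMap ℚ F) c ^ 3 = a * σ a)
    (τ : K₂ ≃ₐ[ℚ] K₂) (hτ : orderOf τ = 2)
    (hτσ : ∀ z : F, τ (algebraMap F K₂ z) = algebraMap F K₂ (σ z)) :
    τ α = (α / algebraMap ℚ K₂ c) ^ 2 * algebraMap F K₂ (σ a) ∧
    τ (α + (α / algebraMap ℚ K₂ c) ^ 2 * algebraMap F K₂ (σ a)) =
      α + (α / algebraMap ℚ K₂ c) ^ 2 * algebraMap F K₂ (σ a) ∧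
    Module.finrank ℚ
      (IntermediateField.adjoin ℚ
        ({α + (α / algebraMap ℚ K₂ c) ^ 2 * algebraMap F K₂ (σ a)} : Set K₂)) = 3 := by
  have hτ2 := τ.apply_apply_of_orderOf_eq_two hτ
  have hτζ : τ ζ ≠ ζ := by
    intro h
    have hF_le : F ≤ fixedField (Subgroup.zpowers τ) :=
      hF ▸ adjoin_simple_le_iff.2 (mem_fixedField_zpowers_iff.2 h)
    exact hσ <| AlgEquiv.ext fun z ↦ Subtype.ext <|
      (hτσ z).symm.trans (mem_fixedField_zpowers_iff.1 (hF_le z.2))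
  have hC : algebraMap ℚ K₂ c = algebraMap F K₂ (algebraMap ℚ F c) :=
    IsScalarTower.algebraMap_apply ℚ F K₂ c
  have hC3 : algebraMap ℚ K₂ c ^ 3 = α ^ 3 * algebraMap F K₂ (σ a) := by
    rw [hC, ← map_pow, hc, map_mul, hα]
  have hnorm : α * τ α = algebraMap ℚ K₂ c :=
    hζ.eq_of_pow_eq_pow_of_map_eq Nat.prime_three τ.toRingHom hτζ
      (by simp [hτ2, mul_comm]) (τ.commutes c)
      (by rw [mul_pow, ← map_pow, hα, hτσ, ← hα, hC3])
  have hc0 : algebraMap ℚ K₂ c ≠ 0 := by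
    rw [hC, ne_eq, map_eq_zero, ← pow_eq_zero_iff three_ne_zero, hc]
    exact mul_ne_zero ha0 (σ.map_ne_zero_iff.2 ha0)
  have hα0 : α ≠ 0 := left_ne_zero_of_mul (hnorm ▸ hc0)
  have hτα : τ α = (α / algebraMap ℚ K₂ c) ^ 2 * algebraMap F K₂ (σ a) := by
    rw [(eq_div_iff hα0).2 (by rw [mul_comm, hnorm] : τ α * α = algebraMap ℚ K₂ c)]
    field_simp
    linear_combination hC3
  refine ⟨hτα, by rw [← hτα, map_add, hτ2, add_comm], ?_⟩
  rw [← hτα]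
  have hfinrank : Module.finrank ℚ (fixedField (Subgroup.zpowers τ)) = 3 := by
    have := finrank_fixedField_zpowers_mul_orderOf τ
    rw [hτ, hdeg] at this
    omega
  refine hfinrank ▸ finrank_adjoin_simple_eq_of_finrank_prime (hfinrank ▸ Nat.prime_three)
    (mem_fixedField_zpowers_iff.2 (by rw [map_add, hτ2, add_comm])) ?_
  rintro ⟨q, hq⟩
  have hmin : X ^ 3 - C a = minpoly F α :=
    minpoly.eq_of_irreducible_of_monic hirr (by simp [hα]) (monic_X_pow_sub_C a three_ne_zero)
  have := minpoly.natDegree_le_two_of_add_eq_of_mul_eq (K := F)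
    (hq.symm.trans (IsScalarTower.algebraMap_apply ℚ F K₂ q)) (hnorm.trans hC)
  rw [← hmin, natDegree_X_pow_sub_C] at this
  omega

/-- In the setting `K₂ = ℚ(ζ₃, ∛a)` abelian of degree 6 over `ℚ`, with `c = ∛(a·σ(a)) ∈ ℚ`
and `τ` the order-2 automorphism of `K₂` extending `σ`, set
`g = (α/c)²·σ(a)` where `α = ∛a`. Then `τ(α) = g`, the element `α + g` is fixed by `τ`,
and it generates the cyclic cubic subfield of `K₂`. -/
theorem stmt17 (K₂ : Type) [Field K₂] [NumberField K₂]
    (ζ α : K₂) (hζ : IsPrimitiveRoot ζ 3)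
    (F : IntermediateField ℚ K₂) (hF : F = IntermediateField.adjoin ℚ {ζ})
    (a : F) (ha0 : a ≠ 0)
    (hirr : Irreducible (Polynomial.X ^ 3 - Polynomial.C a : Polynomial F))
    (hα : α ^ 3 = algebraMap F K₂ a)
    (hgen : IntermediateField.adjoin ℚ ({ζ, α} : Set K₂) = ⊤)
    (hdeg : Module.finrank ℚ K₂ = 6)
    (hGal : IsGalois ℚ K₂)
    (hab : ∀ g h : K₂ ≃ₐ[ℚ] K₂, g * h = h * g)
    (σ : F ≃ₐ[ℚ] F) (hσ : σ ≠ AlgEquiv.refl)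
    (c : ℚ) (hc : (algebraMap ℚ F) c ^ 3 = a * σ a)
    (τ : K₂ ≃ₐ[ℚ] K₂) (hτ : orderOf τ = 2)
    (hτσ : ∀ z : F, τ (algebraMap F K₂ z) = algebraMap F K₂ (σ z)) :
    τ α = (α / algebraMap ℚ K₂ c) ^ 2 * algebraMap F K₂ (σ a) ∧
    τ (α + (α / algebraMap ℚ K₂ c) ^ 2 * algebraMap F K₂ (σ a)) =
      α + (α / algebraMap ℚ K₂ c) ^ 2 * algebraMap F K₂ (σ a) ∧
    Module.finrank ℚ
      (IntermediateField.adjoin ℚ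
        ({α + (α / algebraMap ℚ K₂ c) ^ 2 * algebraMap F K₂ (σ a)} : Set K₂)) = 3 :=
  stmt17_general K₂ ζ α hζ F hF a ha0 hirr hα hdeg σ hσ c hc τ hτ hτσ
end
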